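/- Let $Q$ be the generator matrix of a continuous-time Markov chain on $n$ states (i.e., $q_{ij}\ge 0$ for $i\neq j$, $\sum_j q_{ij}=0$), let $r\in[0,\infty)^n$, $\theta>0$, and set $A=Q-\tfrac{\theta}{2}\mathrm{diag}(r)$. Then for every $t\in[0,T]$, the vector $\varphi(t)=e^{A(T-t)}e_n$ (where $e_n$ is the all-ones vector) has all components strictly positive, and $\varphi$ is the unique solution of $\varphi'(t)=-A\varphi(t)$ on $[0,T)$ with terminal condition $\varphi(T)=e_n$. -/

import Mathlib

/-!
By the exponential series, `φ t = exp ((T - t) • A) *ᵥ 1`. Off the diagonal `A` is nonnegative,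
so `A + c • 1` is entrywise nonnegative for `c = ∑ l, |A l l|`; hence
`exp (s • A) = e^{-sc} • exp (s • (A + c • 1))`, and the exponential of a nonnegative matrix
dominates the identity entrywise, which gives positivity. For uniqueness, if `ψ' = -A ψ` then
`s ↦ exp (s • A) *ᵥ ψ s` has zero right derivative, so it is constant and `ψ` is determined by
its terminal value.
-/

open Set NormedSpace Matrix

namespace Matrix

open scoped Nat

variable {ι : Type*} [Fintype ι]

theorem mulVec_nonneg {X : Matrix ι ι ℝ} (hX : ∀ i j, 0 ≤ X i j) {v : ι → ℝ} (hv : 0 ≤ v) :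
    0 ≤ X *ᵥ v :=
  fun i => Finset.sum_nonneg fun j _ => mul_nonneg (hX i j) (hv j)

variable [DecidableEq ι]

section Exponential

attribute [local instance] Matrix.linftyOpNormedAddCommGroup Matrix.linftyOpNormedRing
  Matrix.linftyOpNormedAlgebra

theorem hasSum_exp_smul_mulVec (A : Matrix ι ι ℝ) (s : ℝ) (v : ι → ℝ) :
    HasSum (fun k : ℕ => (s ^ k / k !) • (A ^ k *ᵥ v)) (exp (s • A) *ᵥ v) := by
  have h := (exp_series_hasSum_exp' (𝕂 := ℝ) (s • A)).map (mulVec.addMonoidHomLeft v)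
    (continuous_id.matrix_mulVec continuous_const)
  convert h using 1
  · ext k : 1
    simp [mulVec.addMonoidHomLeft, smul_pow, smul_mulVec, smul_smul, div_eq_inv_mul]
  · rfl

theorem hasDerivWithinAt_exp_smul_mulVec (A : Matrix ι ι ℝ) {ψ : ℝ → ι → ℝ} {ψ' : ι → ℝ}
    {S : Set ℝ} {s : ℝ} (hψ : HasDerivWithinAt ψ ψ' S s) :
    HasDerivWithinAt (fun s => exp (s • A) *ᵥ ψ s)
      (exp (s • A) *ᵥ ψ' + A *ᵥ (exp (s • A) *ᵥ ψ s)) S s := by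
  have h := (mulVecBilin ℝ ℝ).toContinuousBilinearMap.hasDerivWithinAt_of_bilinear
    (hasDerivAt_exp_smul_const' (𝕂 := ℝ) A s).hasDerivWithinAt hψ
  rw [mulVec_mulVec]
  exact h

theorem hasDerivAt_exp_smul_mulVec (A : Matrix ι ι ℝ) (v : ι → ℝ) (s : ℝ) :
    HasDerivAt (fun s => exp (s • A) *ᵥ v) (A *ᵥ (exp (s • A) *ᵥ v)) s := by
  simpa using hasDerivWithinAt_univ.1
    (hasDerivWithinAt_exp_smul_mulVec A (hasDerivWithinAt_const s univ v))

theorem continuousOn_exp_smul_mulVec (A : Matrix ι ι ℝ) {ψ : ℝ → ι → ℝ} {S : Set ℝ}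
    (hψ : ContinuousOn ψ S) : ContinuousOn (fun s => exp (s • A) *ᵥ ψ s) S :=
  ((mulVecBilin ℝ ℝ : Matrix ι ι ℝ →ₗ[ℝ] (ι → ℝ) →ₗ[ℝ] ι → ℝ).toContinuousBilinearMap
    |>.continuous.comp (differentiable_exp_smul_const ℝ A).continuous).continuousOn.clm_apply hψ

end Exponential

theorem pow_mulVec_nonneg {X : Matrix ι ι ℝ} (hX : ∀ i j, 0 ≤ X i j) {v : ι → ℝ} (hv : 0 ≤ v)
    (k : ℕ) : 0 ≤ X ^ k *ᵥ v := by
  induction k with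
  | zero => simpa using hv
  | succ k ih => simpa [pow_succ', ← mulVec_mulVec] using mulVec_nonneg hX ih

theorem le_exp_mulVec {X : Matrix ι ι ℝ} (hX : ∀ i j, 0 ≤ X i j) {v : ι → ℝ} (hv : 0 ≤ v) :
    v ≤ exp X *ᵥ v := by
  intro i
  have h := Pi.hasSum.1 (by simpa using hasSum_exp_smul_mulVec X 1 v) i
  simpa using le_hasSum h 0 fun k _ => by
    simpa using mul_nonneg (by positivity) (pow_mulVec_nonneg hX hv k i)

theorem exp_smul_one (c : ℝ) : exp (c • (1 : Matrix ι ι ℝ)) = Real.exp c • 1 := by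
  rw [smul_one_eq_diagonal, exp_diagonal, smul_one_eq_diagonal, Pi.exp_def, Real.exp_eq_exp_ℝ]

theorem exp_mulVec_pos {X : Matrix ι ι ℝ} (hX : ∀ i j, i ≠ j → 0 ≤ X i j) {v : ι → ℝ}
    (hv : ∀ i, 0 < v i) (i : ι) : 0 < (exp X *ᵥ v) i := by
  set c := ∑ l, |X l l|
  have hB : ∀ j k, 0 ≤ (X + c • 1) j k := by
    intro j k
    rcases eq_or_ne j k with rfl | hjk
    · have : |X j j| ≤ c := Finset.single_le_sum (fun l _ => abs_nonneg (X l l)) (Finset.mem_univ j)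
      simp only [add_apply, smul_apply, one_apply_eq, smul_eq_mul, mul_one]
      linarith [neg_abs_le (X j j)]
    · simpa [one_apply_ne hjk] using hX j k hjk
  have hsplit : exp X = Real.exp (-c) • exp (X + c • 1) := by
    calc exp X = exp ((-c) • 1 + (X + c • 1)) := by congr 1; module
      _ = exp ((-c) • 1) * exp (X + c • 1) :=
          exp_add_of_commute _ _ ((Commute.one_left _).smul_left _)
      _ = Real.exp (-c) • exp (X + c • 1) := by rw [exp_smul_one, smul_one_mul]
  rw [hsplit, smul_mulVec, Pi.smul_apply, smul_eq_mul]
  exact mul_pos (Real.exp_pos _) ((hv i).trans_le (le_exp_mulVec hB (fun j => (hv j).le) i))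

theorem eq_exp_smul_mulVec_of_hasDerivWithinAt {A : Matrix ι ι ℝ} {a b : ℝ} {ψ : ℝ → ι → ℝ}
    (hc : ContinuousOn ψ (Icc a b))
    (hd : ∀ t ∈ Ico a b, HasDerivWithinAt ψ (-(A *ᵥ ψ t)) (Icc a b) t)
    {t : ℝ} (ht : t ∈ Icc a b) : ψ t = exp ((b - t) • A) *ᵥ ψ b := by
  set u : ℝ → ι → ℝ := fun s => exp (s • A) *ᵥ ψ s
  have hu_cont : ContinuousOn u (Icc a b) := continuousOn_exp_smul_mulVec A hc
  have hu_deriv : ∀ s ∈ Ico a b, HasDerivWithinAt u 0 (Ici s) s := by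
    intro s hs
    have hcomm : A * exp (s • A) = exp (s • A) * A := ((Commute.refl A).smul_right s).exp_right.eq
    have h := hasDerivWithinAt_exp_smul_mulVec A (hd s hs)
    rw [mulVec_mulVec, hcomm, ← mulVec_mulVec, mulVec_neg, neg_add_cancel] at h
    exact h.mono_of_mem_nhdsWithin (Icc_mem_nhdsGE_of_mem hs)
  have hub : u t = u b := by
    rw [constant_of_has_deriv_right_zero hu_cont hu_deriv t ht,
      constant_of_has_deriv_right_zero hu_cont hu_deriv b (right_mem_Icc.2 (ht.1.trans ht.2))]
  have hadd : ∀ s s' : ℝ, exp (s • A) * exp (s' • A) = exp ((s + s') • A) := fun s s' => by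
    rw [add_smul, exp_add_of_commute _ _ (((Commute.refl A).smul_left s).smul_right s')]
  calc ψ t = exp ((-t) • A) *ᵥ u t := by
        rw [mulVec_mulVec, hadd, neg_add_cancel, zero_smul, exp_zero, one_mulVec]
    _ = exp ((b - t) • A) *ᵥ ψ b := by
        rw [hub, mulVec_mulVec, hadd, neg_add_eq_sub]

end Matrix

theorem stmt_2_general (n : ℕ) (T : ℝ)
    (Q : Matrix (Fin n) (Fin n) ℝ)
    (hQoff : ∀ i j, i ≠ j → 0 ≤ Q i j)
    (r : Fin n → ℝ)
    (θ : ℝ)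
    (A : Matrix (Fin n) (Fin n) ℝ)
    (hA : A = Q - (θ / 2) • Matrix.diagonal r)
    (φ : ℝ → Fin n → ℝ)
    (hφ : ∀ t i, φ t i =
      ∑' k : ℕ, ((T - t) ^ k / (Nat.factorial k : ℝ)) * (A ^ k).mulVec (fun _ => 1) i) :
    (∀ t ∈ Icc (0 : ℝ) T, ∀ i, 0 < φ t i) ∧
    (∀ t ∈ Ico (0 : ℝ) T, HasDerivAt φ (-(A.mulVec (φ t))) t) ∧
    (φ T = fun _ => 1) ∧
    (∀ ψ : ℝ → Fin n → ℝ, ContinuousOn ψ (Icc 0 T) →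
      (∀ t ∈ Ico (0 : ℝ) T, HasDerivWithinAt ψ (-(A.mulVec (ψ t))) (Icc 0 T) t) →
      (ψ T = fun _ => 1) → ∀ t ∈ Icc (0 : ℝ) T, ψ t = φ t) := by
  have hAoff : ∀ i j, i ≠ j → 0 ≤ A i j := fun i j hij => by
    simpa [hA, diagonal_apply_ne _ hij] using hQoff i j hij
  have hφ_exp : φ = fun t => exp ((T - t) • A) *ᵥ fun _ => 1 := by
    ext t i
    rw [hφ]
    exact (Pi.hasSum.1 (hasSum_exp_smul_mulVec A (T - t) _) i).tsum_eq
  subst hφ_exp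
  refine ⟨fun t ht i => ?_, fun t _ => ?_, by simp, fun ψ hc hd hψT t ht => ?_⟩
  · refine exp_mulVec_pos (fun i j hij => ?_) (fun _ => one_pos) i
    exact mul_nonneg (sub_nonneg.2 ht.2) (hAoff i j hij)
  · exact (hasDerivAt_exp_smul_mulVec A _ (T - t)).comp_const_sub T t
  · rw [eq_exp_smul_mulVec_of_hasDerivWithinAt hc hd ht, hψT]

/-- For a generator matrix `Q`, nonnegative rates `r`, and `A = Q - (θ/2) diag r`,
the vector `φ(t) = e^{A(T-t)} 𝟙` is strictly positive on `[0,T]`, and it is the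
unique solution of `φ' = -Aφ` on `[0,T)` with terminal condition `φ(T) = 𝟙`. -/
theorem stmt_2 (n : ℕ) (T : ℝ) (hT : 0 ≤ T)
    (Q : Matrix (Fin n) (Fin n) ℝ)
    (hQoff : ∀ i j, i ≠ j → 0 ≤ Q i j)
    (hQrow : ∀ i, ∑ j, Q i j = 0)
    (r : Fin n → ℝ) (hr : ∀ i, 0 ≤ r i)
    (θ : ℝ) (hθ : 0 < θ)
    (A : Matrix (Fin n) (Fin n) ℝ)
    (hA : A = Q - (θ / 2) • Matrix.diagonal r)
    (φ : ℝ → Fin n → ℝ)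
    (hφ : ∀ t i, φ t i =
      ∑' k : ℕ, ((T - t) ^ k / (Nat.factorial k : ℝ)) * (A ^ k).mulVec (fun _ => 1) i) :
    (∀ t ∈ Icc (0 : ℝ) T, ∀ i, 0 < φ t i) ∧
    (∀ t ∈ Ico (0 : ℝ) T, HasDerivAt φ (-(A.mulVec (φ t))) t) ∧
    (φ T = fun _ => 1) ∧
    (∀ ψ : ℝ → Fin n → ℝ, ContinuousOn ψ (Icc 0 T) →
      (∀ t ∈ Ico (0 : ℝ) T, HasDerivWithinAt ψ (-(A.mulVec (ψ t))) (Icc 0 T) t) →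
      (ψ T = fun _ => 1) → ∀ t ∈ Icc (0 : ℝ) T, ψ t = φ t) :=
  stmt_2_general n T Q hQoff r θ A hA φ hφ
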